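/- Let p be a prime and w a word over {0,...,p-1} with |w| > 1. The sequence (a_{p;w}(n))_{n≥0} has no prefix of the form v^{p+1} where |v| = i·p^{|w|-1} for some integer i ≥ p+1. -/

import Mathlib

/-- Number of occurrences of the word `w` as a factor of the word `x`. -/
def occCount (w x : List ℕ) : ℕ :=
  (List.range (x.length + 1)).countP (fun i => decide (w <+: x.drop i))

/-- Base-`m` expansion of `n`, most significant digit first, with `0` written as the digit `0`. -/
def baseExp (m n : ℕ) : List ℕ :=
  if n = 0 then [0] else (Nat.digits m n).reverse

/-- `e_{m;w}(n)`: number of occurrences of `w` in the base-`m` expansion of `n`. -/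
def eCount (m : ℕ) (w : List ℕ) (n : ℕ) : ℕ := occCount w (baseExp m n)

/-- `a_{m;w}(n) = e_{m;w}(n) mod m`. -/
def aSeq (m : ℕ) (w : List ℕ) (n : ℕ) : ℕ := eCount m w n % m

/-- The value `(w)_m` of the digit string `w` in base `m`. -/
def wordVal (m : ℕ) (w : List ℕ) : ℕ := w.foldl (fun acc d => acc * m + d) 0

/-- The finite word `v` is a prefix of the infinite sequence `s`. -/
def IsPrefixSeq (v : List ℕ) (s : ℕ → ℕ) : Prop := ∀ n < v.length, s n = v.getD n 0

/-!
Write `P = p ^ (|w| - 1)`, `Q = p ^ |w|`, `V = (w)_p` and `S(N) = ∑_{n < N} e(n)`.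
Deleting the last digit gives `e(n) = e(n / p) + [w ends the expansion of n]`, and `w` ends the
expansion of `n` iff `n ≡ V (mod Q)` and `n ≥ P`. Summing over `n < kP` (a multiple of `p`)
kills the first term modulo `p`, and counting residues gives
`S(kP) + [V < P] ≡ k / p + [V < (k % p) P] (mod p)` for `k ≥ 1`.
If `v ^ (p + 1)` is a prefix with `|v| = iP`, then `S(kiP) ≡ k S(iP)` for `k ≤ p + 1`:
`k = p + 1` gives `p ∣ i`, and then `k = 2` forces `V ≥ P`. In that case the end-indicator only
depends on `n mod Q`, so restricting to the indices `p n` yields a `(p + 1)`-power prefix with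
block length `(i / p) P`, and we descend on `i`.
-/

open Finset

lemma occCount_cons (w : List ℕ) (a : ℕ) (x : List ℕ) :
    occCount w (a :: x) = occCount w x + if w <+: a :: x then 1 else 0 := by
  rw [occCount, occCount, List.length_cons, List.range_succ_eq_map, List.countP_cons,
    List.countP_map]
  simp [Function.comp_def, add_comm]

lemma occCount_eq_zero_of_length_lt {w x : List ℕ} (h : x.length < w.length) :
    occCount w x = 0 :=
  List.countP_eq_zero.mpr fun i _ hi => by
    have := (of_decide_eq_true hi).length_le
    simp only [List.length_drop] at this
    omega

lemma occCount_concat (w x : List ℕ) (c : ℕ) :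
    occCount w (x ++ [c]) = occCount w x + if w <:+ x ++ [c] then 1 else 0 := by
  induction x with
  | nil =>
    rw [List.nil_append, occCount_cons]
    simp [List.prefix_cons_iff, List.suffix_cons_iff, or_comm]
  | cons a x ih =>
    rw [List.cons_append, occCount_cons, occCount_cons, ih, ← List.cons_append]
    simp only [List.prefix_concat_iff]
    simp only [List.cons_append, List.suffix_cons_iff]
    by_cases hw : w = a :: (x ++ [c])
    · subst hw
      have h1 : ¬ x ++ [c] <+: x := fun h => by simpa using h.length_le
      have h2 : ¬ a :: (x ++ [c]) <:+ x ++ [c] := fun h => by simpa using h.length_le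
      simp [h1, h2]
    · simp only [hw, false_or]
      omega

lemma sum_range_mul_eq_sum_sum {M : Type*} [AddCommMonoid M] (f : ℕ → M) (K L : ℕ) :
    ∑ n ∈ range (K * L), f n = ∑ k ∈ range K, ∑ r ∈ range L, f (k * L + r) := by
  induction K with
  | zero => simp
  | succ K ih => rw [Nat.succ_mul, sum_range_add, ih, sum_range_succ]

lemma getD_flatten_replicate {α : Type*} (v : List α) (d : α) {K k r : ℕ} (hk : k < K)
    (hr : r < v.length) :
    (List.replicate K v).flatten.getD (k * v.length + r) d = v.getD r d := by
  induction K generalizing k with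
  | zero => omega
  | succ K ih =>
    rw [List.replicate_succ, List.flatten_cons]
    rcases k with _ | k
    · rw [zero_mul, zero_add, List.getD_append _ _ _ _ hr]
    · rw [List.getD_append_right _ _ _ _ (by rw [add_one_mul]; omega),
        show (k + 1) * v.length + r - v.length = k * v.length + r by rw [add_one_mul]; omega,
        ih (by omega)]

section

variable {b : ℕ} {w : List ℕ}

lemma wordVal_eq_ofDigits : wordVal b w = Nat.ofDigits b w.reverse := by
  induction w using List.reverseRecOn with
  | nil => rfl
  | append_singleton w d ih =>
    rw [wordVal, List.foldl_concat, ← wordVal, ih, List.reverse_concat, Nat.ofDigits_cons]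
    ring

lemma wordVal_lt_pow (hb : 1 < b) (hw : ∀ d ∈ w, d < b) : wordVal b w < b ^ w.length := by
  rw [wordVal_eq_ofDigits, ← List.length_reverse]
  exact Nat.ofDigits_lt_base_pow_length hb (by simpa using hw)

lemma baseExp_of_ne_zero {n : ℕ} (hn : n ≠ 0) : baseExp b n = (Nat.digits b n).reverse :=
  if_neg hn

lemma baseExp_of_lt {n : ℕ} (h : n < b) : baseExp b n = [n] := by
  unfold baseExp
  split_ifs with hn
  · rw [hn]
  · rw [Nat.digits_of_lt b n hn h, List.reverse_singleton]

lemma baseExp_of_le {n : ℕ} (hb : 1 < b) (h : b ≤ n) :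
    baseExp b n = baseExp b (n / b) ++ [n % b] := by
  rw [baseExp_of_ne_zero (by omega), baseExp_of_ne_zero (Nat.div_pos h (by omega)).ne',
    Nat.digits_def' hb (by omega), List.reverse_cons]

lemma suffix_baseExp_iff {n : ℕ} (hb : 1 < b) (hw : ∀ d ∈ w, d < b) (hn : n ≠ 0) :
    w <:+ baseExp b n ↔ n % b ^ w.length = wordVal b w ∧ b ^ (w.length - 1) ≤ n := by
  have hlen : 0 < (Nat.digits b n).length :=
    List.length_pos_of_ne_nil (Nat.digits_ne_nil_iff_ne_zero.mpr hn)
  rw [baseExp_of_ne_zero hn, ← List.reverse_prefix, List.reverse_reverse,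
    List.prefix_iff_eq_take, ← Nat.lt_digits_length_iff hb, wordVal_eq_ofDigits,
    Nat.self_mod_pow_eq_ofDigits_take _ _ hb, List.length_reverse]
  constructor
  · intro h
    refine ⟨by rw [← h], ?_⟩
    have := congrArg List.length h
    simp only [List.length_reverse, List.length_take, left_eq_inf] at this
    omega
  · rintro ⟨h, hl⟩
    refine Nat.ofDigits_inj_of_len_eq hb ?_ (by simpa using hw)
      (fun d hd => Nat.digits_lt_base hb (List.mem_of_mem_take hd)) h.symm
    simp only [List.length_reverse, List.length_take]
    omega

/-- `1` if `w` occurs at the end of the base-`b` expansion of `n`, `0` otherwise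
(see `suffix_baseExp_iff`). -/
def endOcc (b : ℕ) (w : List ℕ) (n : ℕ) : ℕ :=
  if n % b ^ w.length = wordVal b w ∧ b ^ (w.length - 1) ≤ n then 1 else 0

lemma eCount_eq_eCount_div_add_endOcc (hb : 1 < b) (hw : ∀ d ∈ w, d < b)
    (hlen : 1 < w.length) (n : ℕ) : eCount b w n = eCount b w (n / b) + endOcc b w n := by
  rcases lt_or_ge n b with hn | hn
  · have hsingle : ∀ m < b, eCount b w m = 0 := fun m hm => by
      rw [eCount, baseExp_of_lt hm]
      exact occCount_eq_zero_of_length_lt (by simpa using hlen)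
    have hend : endOcc b w n = 0 := if_neg fun h =>
      (Nat.le_self_pow (by omega) b).not_gt (h.2.trans_lt hn)
    rw [hsingle n hn, Nat.div_eq_of_lt hn, hsingle 0 (by omega), hend]
  · rw [eCount, eCount, baseExp_of_le hb hn, occCount_concat, ← baseExp_of_le hb hn, endOcc]
    simp only [suffix_baseExp_iff hb hw (show n ≠ 0 by omega)]

lemma endOcc_mul_pow_add (hV : b ^ (w.length - 1) ≤ wordVal b w) (m n : ℕ) :
    endOcc b w (m * b ^ w.length + n) = endOcc b w n := by
  have := Nat.mod_le n (b ^ w.length)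
  rw [endOcc, endOcc, mul_comm, Nat.mul_add_mod]
  split_ifs <;> omega

lemma sum_endOcc_add_ite (hb : 1 < b) (hw : ∀ d ∈ w, d < b) {N : ℕ}
    (hN : b ^ (w.length - 1) ≤ N) :
    (∑ n ∈ range N, endOcc b w n) + (if wordVal b w < b ^ (w.length - 1) then 1 else 0) =
      N / b ^ w.length + if wordVal b w < N % b ^ w.length then 1 else 0 := by
  have hVQ := wordVal_lt_pow hb hw
  have hPQ : b ^ (w.length - 1) ≤ b ^ w.length := Nat.pow_le_pow_right (by omega) (by omega)
  have hcount : ∀ M, (∑ n ∈ range M, endOcc b w n) +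
      (if wordVal b w < b ^ (w.length - 1) ∧ wordVal b w < M then 1 else 0) =
      M.count (· ≡ wordVal b w [MOD b ^ w.length]) := by
    intro M
    induction M with
    | zero => simp
    | succ M ih =>
      rw [sum_range_succ, Nat.count_succ, ← ih]
      simp only [Nat.ModEq, Nat.mod_eq_of_lt hVQ, endOcc]
      have hsmall : M < b ^ (w.length - 1) → M % b ^ w.length = M :=
        fun h => Nat.mod_eq_of_lt (by omega)
      have := Nat.mod_le M (b ^ w.length)
      split_ifs <;> omega
  have h := hcount N
  rw [Nat.count_modEq_card N (by positivity) _, Nat.mod_eq_of_lt hVQ] at h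
  rw [← h]
  split_ifs at h ⊢ <;> omega

def eSum (b : ℕ) (w : List ℕ) (N : ℕ) : ℕ := ∑ n ∈ range N, eCount b w n

lemma eSum_mul_base (hb : 1 < b) (hw : ∀ d ∈ w, d < b) (hlen : 1 < w.length) (A : ℕ) :
    eSum b w (A * b) = b * eSum b w A + ∑ n ∈ range (A * b), endOcc b w n := by
  have hdigit : ∀ a, ∀ j ∈ range b, (a * b + j) / b = a := fun a j hj => by
    rw [add_comm, Nat.add_mul_div_right _ _ (by omega), Nat.div_eq_of_lt (mem_range.mp hj),
      zero_add]
  rw [eSum, sum_congr rfl fun n _ => eCount_eq_eCount_div_add_endOcc hb hw hlen n,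
    sum_add_distrib, sum_range_mul_eq_sum_sum (fun n => eCount b w (n / b)), eSum, mul_sum]
  congr 1
  refine sum_congr rfl fun a _ => ?_
  rw [sum_congr rfl fun j hj => congrArg (eCount b w) (hdigit a j hj), sum_const, card_range,
    smul_eq_mul]

lemma cast_eSum_mul_pow (hb : 1 < b) (hw : ∀ d ∈ w, d < b) (hlen : 1 < w.length) {k : ℕ}
    (hk : k ≠ 0) :
    (eSum b w (k * b ^ (w.length - 1)) : ZMod b) +
        (if wordVal b w < b ^ (w.length - 1) then 1 else 0) =
      ((k / b : ℕ) : ZMod b) + if wordVal b w < k % b * b ^ (w.length - 1) then 1 else 0 := by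
  have hpow : b ^ w.length = b * b ^ (w.length - 1) := (mul_pow_sub_one (by omega) b).symm
  have hsplit : k * b ^ (w.length - 1) = k * b ^ (w.length - 2) * b := by
    rw [mul_assoc, ← pow_succ]
    congr 2
    omega
  have h := sum_endOcc_add_ite hb hw (N := k * b ^ (w.length - 1))
    (Nat.le_mul_of_pos_left _ (Nat.pos_of_ne_zero hk))
  rw [hpow, Nat.mul_div_mul_right _ _ (by positivity), Nat.mul_mod_mul_right] at h
  rw [hsplit, eSum_mul_base hb hw hlen, ← hsplit]
  have := congrArg (Nat.cast : ℕ → ZMod b) h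
  push_cast at this ⊢
  rwa [ZMod.natCast_self, zero_mul, zero_add]

end

def BlocksAgree (b : ℕ) (w : List ℕ) (K L : ℕ) : Prop :=
  ∀ k < K, ∀ r < L, (eCount b w (k * L + r) : ZMod b) = eCount b w r

namespace BlocksAgree

variable {b : ℕ} {w : List ℕ} {K L : ℕ}

lemma mono {K' : ℕ} (h : BlocksAgree b w K L) (hK : K' ≤ K) : BlocksAgree b w K' L :=
  fun k hk => h k (hk.trans_le hK)

lemma eSum_mul (h : BlocksAgree b w K L) : (eSum b w (K * L) : ZMod b) = K * eSum b w L := by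
  rw [eSum, Nat.cast_sum, sum_range_mul_eq_sum_sum, sum_congr rfl fun k hk =>
    sum_congr rfl fun r hr => h k (mem_range.mp hk) r (mem_range.mp hr)]
  simp [eSum]

lemma dvd (hb : 1 < b) (hw : ∀ d ∈ w, d < b) (hlen : 1 < w.length) {i : ℕ} (hi : i ≠ 0)
    (h : BlocksAgree b w (b + 1) (i * b ^ (w.length - 1))) : b ∣ i := by
  have hfull := cast_eSum_mul_pow hb hw hlen (k := (b + 1) * i) (by positivity)
  have hblock := cast_eSum_mul_pow hb hw hlen hi
  rw [show (b + 1) * i = i + b * i by ring, Nat.add_mul_div_left _ _ (by omega),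
    Nat.add_mul_mod_self_left, ← show (b + 1) * i = i + b * i by ring, mul_assoc,
    h.eSum_mul] at hfull
  push_cast at hfull
  rw [ZMod.natCast_self, zero_add, one_mul] at hfull
  refine (ZMod.natCast_eq_zero_iff i b).mp ?_
  linear_combination hblock - hfull

lemma pow_le_wordVal (hb : 1 < b) (hw : ∀ d ∈ w, d < b) (hlen : 1 < w.length) {q : ℕ}
    (hq : q ≠ 0) (h : BlocksAgree b w (b + 1) (b * q * b ^ (w.length - 1))) :
    b ^ (w.length - 1) ≤ wordVal b w := by
  by_contra! hV
  have htwo := cast_eSum_mul_pow hb hw hlen (k := 2 * (b * q)) (by positivity)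
  have hone := cast_eSum_mul_pow hb hw hlen (k := b * q) (by positivity)
  rw [mul_assoc 2, (h.mono (by omega)).eSum_mul] at htwo
  simp only [hV, Nat.mul_mod_right, mul_left_comm 2 b, zero_mul, not_lt_zero, if_false,
    Nat.mul_div_cancel_left _ (show 0 < b by omega)] at htwo hone
  have h1 : ((1 : ℕ) : ZMod b) = 0 := by
    push_cast at htwo hone ⊢
    linear_combination 2 * hone - htwo
  exact absurd (Nat.le_of_dvd one_pos ((ZMod.natCast_eq_zero_iff 1 b).mp h1)) (by omega)

lemma of_mul_base (hb : 1 < b) (hw : ∀ d ∈ w, d < b) (hlen : 1 < w.length)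
    (hV : b ^ (w.length - 1) ≤ wordVal b w) (hL : b ^ (w.length - 1) ∣ L)
    (h : BlocksAgree b w K (b * L)) : BlocksAgree b w K L := by
  obtain ⟨c, rfl⟩ := hL
  intro k hk r hr
  have hscale : ∀ n, eCount b w (b * n) = eCount b w n + endOcc b w (b * n) := fun n => by
    rw [eCount_eq_eCount_div_add_endOcc hb hw hlen, Nat.mul_div_cancel_left _ (by omega)]
  have hshift : b * (k * (b ^ (w.length - 1) * c) + r) = k * c * b ^ w.length + b * r := by
    rw [← mul_pow_sub_one (by omega : w.length ≠ 0) b]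
    ring
  have key := h k hk (b * r) (Nat.mul_lt_mul_of_pos_left hr (by omega))
  rw [show k * (b * (b ^ (w.length - 1) * c)) + b * r = b * (k * (b ^ (w.length - 1) * c) + r)
    by ring, hscale, hscale, hshift, endOcc_mul_pow_add hV] at key
  push_cast at key
  exact add_right_cancel key

end BlocksAgree

theorem not_blocksAgree {b : ℕ} {w : List ℕ} (hb : 1 < b) (hw : ∀ d ∈ w, d < b)
    (hlen : 1 < w.length) :
    ∀ i ≠ 0, ¬ BlocksAgree b w (b + 1) (i * b ^ (w.length - 1)) := by
  intro i
  induction i using Nat.strong_induction_on with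
  | _ i ih =>
    intro hi h
    obtain ⟨q, rfl⟩ := h.dvd hb hw hlen hi
    have hq : q ≠ 0 := by rintro rfl; simp at hi
    have hV := h.pow_le_wordVal hb hw hlen hq
    rw [mul_assoc] at h
    exact ih q (lt_mul_left (Nat.pos_of_ne_zero hq) hb) hq
      (h.of_mul_base hb hw hlen hV (dvd_mul_left _ _))

lemma IsPrefixSeq.apply_mul_length_add {v : List ℕ} {s : ℕ → ℕ} {K : ℕ}
    (h : IsPrefixSeq (List.replicate K v).flatten s) {k r : ℕ} (hk : k < K)
    (hr : r < v.length) : s (k * v.length + r) = s r := by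
  have hlen : (List.replicate K v).flatten.length = K * v.length := by simp
  have hbound : k * v.length + r < K * v.length :=
    calc k * v.length + r < (k + 1) * v.length := by rw [add_one_mul]; omega
      _ ≤ K * v.length := Nat.mul_le_mul_right _ hk
  rw [h _ (hlen ▸ hbound), h r (hlen ▸ hr.trans_le (Nat.le_mul_of_pos_left _ (by omega))),
    getD_flatten_replicate v 0 hk hr, ← getD_flatten_replicate v 0 (Nat.zero_lt_of_lt hk) hr,
    zero_mul, zero_add]

lemma blocksAgree_of_isPrefixSeq {b : ℕ} {w v : List ℕ} {K : ℕ}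
    (h : IsPrefixSeq (List.replicate K v).flatten (aSeq b w)) : BlocksAgree b w K v.length :=
  fun _ hk _ hr => (ZMod.natCast_eq_natCast_iff' _ _ b).mpr (h.apply_mul_length_add hk hr)

theorem stmt11 (p : ℕ) (hp : p.Prime) (w : List ℕ)
    (hw : ∀ d ∈ w, d < p) (hlen : 1 < w.length) :
    ∀ (v : List ℕ) (i : ℕ), p + 1 ≤ i → v.length = i * p ^ (w.length - 1) →
      ¬ IsPrefixSeq ((List.replicate (p + 1) v).flatten) (aSeq p w) := by
  intro v i hi hv hpre
  refine not_blocksAgree hp.one_lt hw hlen i (by omega) ?_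
  rw [← hv]
  exact blocksAgree_of_isPrefixSeq hpre
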